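/- arXiv:cs/0508044 — 2 statements merged into one kernel-verified Lean document; each statement's English description precedes it below -/
import Mathlib

section
/- Let M be an r×r integer matrix whose rows are partitioned into a top block of k rows and a bottom block of r−k rows, such that the bottom block (viewed as a (r−k)×r matrix) is a submatrix of a totally unimodular matrix, each of the top k rows has at most w nonzero entries, and every entry of the top k rows has absolute value at most a. Then |det(M)| ≤ (a·w)^k. -/
/-!
Expand the determinant along one sparse top row at a time: it becomes a sum of at most `w`
terms, each an entry of size at most `a` times the determinant of the matrix in which that row is
replaced by a unit vector. Once every top row is a unit vector, the whole matrix is totally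
unimodular (appending unit rows preserves total unimodularity), so its determinant is at most `1`
in absolute value.
-/

/-- An integer matrix is totally unimodular if every square submatrix has
determinant `0`, `1`, or `-1`. -/
def IsTotUnimod {R C : Type} (A : Matrix R C ℤ) : Prop :=
  ∀ (k : ℕ) (f : Fin k → R) (g : Fin k → C),
    (A.submatrix f g).det = 0 ∨ (A.submatrix f g).det = 1 ∨ (A.submatrix f g).det = -1

open Finset Matrix

theorem IsTotUnimod.isTotallyUnimodular {R C : Type} {A : Matrix R C ℤ} (hA : IsTotUnimod A) :
    A.IsTotallyUnimodular :=
  (isTotallyUnimodular_iff A).2 fun k f g => by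
    rcases hA k f g with h | h | h
    exacts [⟨0, h.symm⟩, ⟨1, h.symm⟩, ⟨-1, by simp [h]⟩]

theorem abs_sum_mul_le_card_mul {n : Type*} [Fintype n] (f g : n → ℝ) {a b : ℝ} {w : ℕ}
    (hw : #{j | f j ≠ 0} ≤ w) (hf : ∀ j, |f j| ≤ a) (hg : ∀ j, |g j| ≤ b)
    (ha : 0 ≤ a) (hb : 0 ≤ b) :
    |∑ j, f j * g j| ≤ w * (a * b) := by
  calc |∑ j, f j * g j| = |∑ j with f j ≠ 0, f j * g j| := by
        rw [sum_filter_of_ne fun j _ h => left_ne_zero_of_mul h]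
    _ ≤ ∑ j with f j ≠ 0, |f j| * |g j| := by
        simpa only [abs_mul] using abs_sum_le_sum_abs (fun j => f j * g j) _
    _ ≤ ∑ j with f j ≠ 0, a * b := by
        gcongr with j
        exacts [hf j, hg j]
    _ ≤ w * (a * b) := by
        rw [sum_const, nsmul_eq_mul]
        gcongr

namespace Matrix

theorem det_eq_sum_mul_det_updateRow {R n : Type*} [CommRing R] [Fintype n] [DecidableEq n]
    (A : Matrix n n R) (i : n) :
    A.det = ∑ j, A i j * (A.updateRow i (Pi.single j 1)).det := by
  simp only [det_eq_sum_mul_adjugate_row A i, adjugate_apply]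

variable {ι κ : Type*} [Fintype ι] [DecidableEq ι] [Fintype κ] [DecidableEq κ]

theorem abs_det_le_one_of_toRows₁_single (M : Matrix (ι ⊕ κ) (ι ⊕ κ) ℤ)
    (hbot : M.toRows₂.IsTotallyUnimodular) (hunit : ∀ i, ∃ j, M (.inl i) = Pi.single j 1) :
    |M.det| ≤ 1 := by
  have hM : M.IsTotallyUnimodular := by
    have h := hbot.fromRows_unitlike (B := M.toRows₁)
      fun _ i => (hunit i).imp fun _ hj => ⟨1, by rw [SignType.coe_one]; exact hj⟩
    convert h.submatrix Sum.swap id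
    ext (i | i) j <;> rfl
  obtain ⟨s, hs⟩ := (isTotallyUnimodular_iff_fintype M).1 hM _ id id
  rw [submatrix_id_id] at hs
  rw [← hs]
  cases s <;> simp

theorem abs_det_le_of_sparse_toRows₁ (M : Matrix (ι ⊕ κ) (ι ⊕ κ) ℤ) (S : Finset ι) {a : ℝ} {w : ℕ}
    (hbot : M.toRows₂.IsTotallyUnimodular)
    (hw : ∀ i ∈ S, #{j | M (.inl i) j ≠ 0} ≤ w)
    (ha : ∀ i ∈ S, ∀ j, |(M (.inl i) j : ℝ)| ≤ a)
    (hunit : ∀ i ∉ S, ∃ j, M (.inl i) = Pi.single j 1) :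
    |(M.det : ℝ)| ≤ (a * w) ^ #S := by
  induction S using Finset.induction_on generalizing M with
  | empty =>
    rw [card_empty, pow_zero, ← Int.cast_abs]
    exact_mod_cast abs_det_le_one_of_toRows₁_single M hbot fun i => hunit i (notMem_empty i)
  | insert i S hiS ih =>
    have ha₀ : 0 ≤ a := (abs_nonneg _).trans (ha i (mem_insert_self i S) (.inl i))
    set N := fun j => M.updateRow (.inl i) (Pi.single j 1)
    have hNrow : ∀ j {i'}, i' ≠ i → N j (.inl i') = M (.inl i') := fun j i' h =>
      updateRow_ne (Sum.inl_injective.ne h)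
    have hN : ∀ j, |((N j).det : ℝ)| ≤ (a * w) ^ #S := by
      intro j
      -- `(N j).toRows₂` is `M.toRows₂` by definitional unfolding, so `hbot` applies as is.
      refine ih (N j) hbot (fun i' hi' => ?_) (fun i' hi' => ?_) (fun i' hi' => ?_)
      · rw [hNrow j (ne_of_mem_of_not_mem hi' hiS)]
        exact hw i' (mem_insert_of_mem hi')
      · rw [hNrow j (ne_of_mem_of_not_mem hi' hiS)]
        exact ha i' (mem_insert_of_mem hi')
      · by_cases hii' : i' = i
        · exact ⟨j, by simp [N, hii']⟩
        · rw [hNrow j hii']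
          exact hunit i' (by simp [hii', hi'])
    calc |(M.det : ℝ)| = |∑ j, (M (.inl i) j : ℝ) * ((N j).det : ℝ)| := by
          rw [det_eq_sum_mul_det_updateRow M (.inl i)]
          push_cast
          rfl
      _ ≤ w * (a * (a * w) ^ #S) := by
          refine abs_sum_mul_le_card_mul _ _ ?_ (ha i (mem_insert_self i S)) hN ha₀ (by positivity)
          simpa using hw i (mem_insert_self i S)
      _ = (a * w) ^ #(insert i S) := by
          rw [card_insert_of_notMem hiS]
          ring

end Matrix

/-- Let `M` be an `r × r` integer matrix (`r = k + l`) whose bottom `l` rows form a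
totally unimodular matrix (equivalently, a submatrix of a totally unimodular matrix),
whose top `k` rows each have at most `w` nonzero entries, all of absolute value at most
`a`. Then `|det M| ≤ (a * w) ^ k`. -/
theorem det_le_of_top_sparse_bottom_TUM {k l : ℕ}
    (M : Matrix (Fin k ⊕ Fin l) (Fin k ⊕ Fin l) ℤ) (a : ℝ) (w : ℕ)
    (hbot : IsTotUnimod (Matrix.of fun (i : Fin l) (j : Fin k ⊕ Fin l) => M (Sum.inr i) j))
    (hw : ∀ i : Fin k,
      (Finset.univ.filter fun j : Fin k ⊕ Fin l => M (Sum.inl i) j ≠ 0).card ≤ w)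
    (ha : ∀ (i : Fin k) (j : Fin k ⊕ Fin l), |((M (Sum.inl i) j : ℤ) : ℝ)| ≤ a) :
    |((M.det : ℤ) : ℝ)| ≤ (a * w) ^ k := by
  simpa using M.abs_det_le_of_sparse_toRows₁ univ hbot.isTotallyUnimodular (fun i _ => hw i)
    (fun i _ => ha i) (fun i hi => absurd (mem_univ i) hi)
end

section
/- Let G be a weighted directed graph on n+1 vertices in which every edge weight is an integer of absolute value at most B+1, and suppose there exists an assignment of integers to the vertices such that for every edge (u, v) of weight c, the value at u is at least the value at v plus c (equivalently, G has no positive-weight cycle and a valid potential exists). Then there exists such an assignment in which the difference between the maximum and minimum assigned values is at most n·(B+1). -/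
/-!
Compress the values of a valid potential `f`: list them in increasing order and shrink every gap
between consecutive values to at most `K = B + 1`. Edges whose endpoints' values increase along
the edge only need the potential not to grow faster than `f`, while edges of weight `c ≤ K` going
down still see a drop of at least `min (f u - f v) K ≥ c`. Since at most `n + 1` distinct values
occur, the compressed potential has spread at most `n * K`.
-/

open Finset

def IsCappedCompression (K : ℤ) (S : Finset ℤ) (φ : ℤ → ℤ) : Prop :=
  ∀ a ∈ S, ∀ b ∈ S, a ≤ b →
    min (b - a) K ≤ φ b - φ a ∧ φ b - φ a ≤ b - a ∧ φ b - φ a ≤ (#S - 1 : ℤ) * K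

namespace IsCappedCompression

variable {K : ℤ} {S : Finset ℤ} {φ : ℤ → ℤ}

lemma singleton (hK : 0 ≤ K) (a : ℤ) :
    IsCappedCompression K {a} φ := by
  intro x hx y hy _
  rw [mem_singleton] at hx hy
  subst hx hy
  simp [hK]

lemma insert_of_max (hK : 0 ≤ K) {s : Finset ℤ}
    (hφ : IsCappedCompression K s φ) {m a : ℤ} (hm : m ∈ s) (hm_max : ∀ x ∈ s, x ≤ m)
    (hma : m < a) :
    IsCappedCompression K (insert a s) (Function.update φ a (φ m + min (a - m) K)) := by
  have ha : a ∉ s := fun h => (hm_max a h).not_gt hma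
  have hcard : (#(insert a s) - 1 : ℤ) = #s := by rw [card_insert_of_notMem ha]; push_cast; ring
  have hφs : ∀ x ∈ s, Function.update φ a (φ m + min (a - m) K) x = φ x :=
    fun x hx => Function.update_of_ne (ne_of_lt ((hm_max x hx).trans_lt hma)) _ _
  intro x hx y hy hxy
  rw [hcard]
  rcases mem_insert.mp hx with hxa | hx <;> rcases mem_insert.mp hy with hya | hy
  · simp only [hxa, hya, sub_self, le_refl, min_eq_left hK, true_and]
    positivity
  · exact absurd ((hxa ▸ hxy).trans (hm_max y hy)) hma.not_ge
  · obtain ⟨hlo, hhi, hspread⟩ := hφ x hx m hm (hm_max x hx)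
    rw [hya, Function.update_self, hφs x hx]
    refine ⟨?_, ?_, ?_⟩
    · have : min (a - x) K ≤ min (m - x) K + min (a - m) K := by
        have := hm_max x hx
        omega
      linarith
    · linarith [min_le_left (a - m) K]
    · linarith [min_le_right (a - m) K]
  · obtain ⟨hlo, hhi, hspread⟩ := hφ x hx y hy hxy
    simp only [hφs x hx, hφs y hy]
    exact ⟨hlo, hhi, by linarith⟩

lemma add_le_of_add_le (hφ : IsCappedCompression K S φ) {x y c : ℤ} (hx : x ∈ S) (hy : y ∈ S)
    (hcK : c ≤ K) (h : x + c ≤ y) : φ x + c ≤ φ y := by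
  rcases le_total x y with hxy | hyx
  · have := (hφ x hx y hy hxy).1
    have : c ≤ min (y - x) K := le_min (by linarith) hcK
    linarith
  · linarith [(hφ y hy x hx hyx).2.1]

lemma sub_le_card_mul (hφ : IsCappedCompression K S φ) (hK : 0 ≤ K) {x y : ℤ} (hx : x ∈ S)
    (hy : y ∈ S) : φ y - φ x ≤ (#S - 1 : ℤ) * K := by
  rcases le_total x y with hxy | hyx
  · exact (hφ x hx y hy hxy).2.2
  · have hmono : 0 ≤ φ x - φ y := le_trans (le_min (by linarith) hK) (hφ y hy x hx hyx).1
    have hcard : (0 : ℤ) ≤ #S - 1 := by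
      have : 0 < #S := card_pos.mpr ⟨x, hx⟩
      omega
    nlinarith

end IsCappedCompression

lemma exists_isCappedCompression {K : ℤ} (hK : 0 ≤ K) (S : Finset ℤ) :
    ∃ φ : ℤ → ℤ, IsCappedCompression K S φ := by
  induction S using Finset.induction_on_max with
  | empty => exact ⟨id, by simp [IsCappedCompression]⟩
  | insert a s hlt ih =>
    obtain ⟨φ, hφ⟩ := ih
    rcases s.eq_empty_or_nonempty with rfl | hs
    · exact ⟨φ, IsCappedCompression.singleton hK a⟩
    · exact ⟨_, hφ.insert_of_max hK (s.max'_mem hs) (fun x hx => s.le_max' x hx)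
        (hlt _ (s.max'_mem hs))⟩

/-- Difference-logic solution bound: if a weighted directed graph on `n + 1` vertices,
with integer edge weights of absolute value at most `B + 1`, admits a valid potential
(`f u ≥ f v + c` for every edge `(u, v)` of weight `c`), then it admits one whose
spread (difference between any two values) is at most `n * (B + 1)`. -/
theorem difference_logic_solution_bound (n B : ℕ)
    (E : Fin (n + 1) → Fin (n + 1) → Prop) (w : Fin (n + 1) → Fin (n + 1) → ℤ)
    (hw : ∀ u v, E u v → |w u v| ≤ (B : ℤ) + 1)
    (hsat : ∃ f : Fin (n + 1) → ℤ, ∀ u v, E u v → f v + w u v ≤ f u) :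
    ∃ f : Fin (n + 1) → ℤ, (∀ u v, E u v → f v + w u v ≤ f u) ∧
      ∀ u v, f u - f v ≤ (n : ℤ) * ((B : ℤ) + 1) := by
  obtain ⟨f, hf⟩ := hsat
  have hK : (0 : ℤ) ≤ B + 1 := by positivity
  have hS : ∀ u, f u ∈ univ.image f := fun u => mem_image_of_mem f (mem_univ u)
  have hcard : (#(univ.image f) - 1 : ℤ) ≤ n := by
    have : #(univ.image f) ≤ n + 1 := card_image_le.trans (by simp)
    omega
  obtain ⟨φ, hφ⟩ := exists_isCappedCompression hK (univ.image f)
  refine ⟨φ ∘ f, fun u v huv => ?_, fun u v => ?_⟩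
  · exact hφ.add_le_of_add_le (hS v) (hS u) (abs_le.mp (hw u v huv)).2 (hf u v huv)
  · calc φ (f u) - φ (f v) ≤ (#(univ.image f) - 1 : ℤ) * (B + 1) :=
          hφ.sub_le_card_mul hK (hS v) (hS u)
      _ ≤ n * (B + 1) := by gcongr
end
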